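/- Let X be a finite δ-hyperbolic metric space with δ > 0, ordered by distance to a base point p = x₁ < ⋯ < xₙ (so xᵢ < xⱼ implies d(xᵢ,p) ≤ d(xⱼ,p)). Suppose X is ν-geodesic, let t ≥ 4δ+2ν, and suppose d(xᵢ,p) ≥ t. Then there exists z ∈ {x₁,…,x_{i−1}} with d(z,xᵢ) ≤ 2δ+2ν such that every y ∈ {x₁,…,xᵢ} with d(y,xᵢ) ≤ t satisfies d(y,z) ≤ t. -/

import Mathlib

def IsDeltaHyperbolic (X : Type*) [MetricSpace X] (δ : ℝ) : Prop :=
  ∀ w x y z : X,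
    dist w x + dist y z ≤ max (dist w y + dist x z) (dist w z + dist x y) + 2 * δ

def IsGeodesicWithDefect (X : Type*) [MetricSpace X] (ν : ℝ) : Prop :=
  ∀ x y : X, ∀ r s : ℝ, 0 ≤ r → 0 ≤ s → r + s = dist x y →
    ∃ z : X, dist x z ≤ r + ν ∧ dist y z ≤ s + ν

/-!
Take `z` on an approximate geodesic from `xᵢ` to `p` at distance about `2δ + ν` from `xᵢ`; it is
closer to `p` than `xᵢ` by at least `2δ`, so it comes earlier in the order. For `y` with
`d(y, p) ≤ d(xᵢ, p)` and `d(y, xᵢ) ≤ t`, the four-point condition on `y, z, p, xᵢ` bounds `d(y, z)`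
either by `d(z, xᵢ) + 2δ ≤ t` or by `d(y, xᵢ) ≤ t`.
-/

theorem IsGeodesicWithDefect.exists_dist_le {X : Type*} [MetricSpace X] {ν : ℝ}
    (h : IsGeodesicWithDefect X ν) (x y : X) {r : ℝ} (hr₀ : 0 ≤ r) (hr : r ≤ dist x y) :
    ∃ z : X, dist z x ≤ r + ν ∧ dist z y ≤ dist x y - r + ν := by
  obtain ⟨z, hxz, hyz⟩ := h x y r (dist x y - r) hr₀ (by linarith) (by ring)
  exact ⟨z, by rwa [dist_comm], by rwa [dist_comm]⟩

theorem IsDeltaHyperbolic.dist_le_of_closer_to_base {X : Type*} [MetricSpace X] {δ t : ℝ}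
    (h : IsDeltaHyperbolic X δ) {p x y z : X} (hyp : dist y p ≤ dist x p) (hyx : dist y x ≤ t)
    (hzp : dist z p + 2 * δ ≤ dist x p) (hzx : dist z x + 2 * δ ≤ t) :
    dist y z ≤ t := by
  have four_point := h y z p x
  rw [dist_comm p x] at four_point
  rcases max_cases (dist y p + dist z x) (dist y x + dist z p) with ⟨hmax, _⟩ | ⟨hmax, _⟩ <;>
    linarith

theorem stmt7_general (X : Type*) [MetricSpace X] (δ ν t : ℝ) (hδ : 0 < δ)
    (hhyp : IsDeltaHyperbolic X δ) (hgeo : IsGeodesicWithDefect X ν) (hν : 0 ≤ ν)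
    (ht : 4 * δ + 2 * ν ≤ t) (n : ℕ) (x : Fin (n + 1) → X)
    (hbij : Function.Bijective x)
    (hord : ∀ j k : Fin (n + 1), j ≤ k → dist (x j) (x 0) ≤ dist (x k) (x 0))
    (i : Fin (n + 1)) (hi : t ≤ dist (x i) (x 0)) :
    ∃ j : Fin (n + 1), j < i ∧ dist (x j) (x i) ≤ 2 * δ + 2 * ν ∧
      ∀ k : Fin (n + 1), k ≤ i → dist (x k) (x i) ≤ t → dist (x k) (x j) ≤ t := by
  obtain ⟨z, hzx, hzp⟩ := hgeo.exists_dist_le (x i) (x 0) (r := 2 * δ + ν)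
    (by linarith) (by linarith)
  obtain ⟨j, rfl⟩ := hbij.surjective z
  have hji : j < i := by
    by_contra! hij
    linarith [hord i j hij]
  refine ⟨j, hji, by linarith, fun k hki hkt => ?_⟩
  exact hhyp.dist_le_of_closer_to_base (hord k i hki) hkt (by linarith) (by linarith)

/-- Key geometric step of the filtered contractibility lemma: if `X` is a finite
`δ`-hyperbolic `ν`-geodesic metric space enumerated as `x 0 < ⋯ < x n` by
nondecreasing distance to the base point `p = x 0`, `t ≥ 4δ + 2ν`, and
`d(x i, p) ≥ t`, then there is an earlier point `z = x j`, `j < i`, with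
`d(z, x i) ≤ 2δ + 2ν` such that every `y = x k` with `k ≤ i` and
`d(y, x i) ≤ t` satisfies `d(y, z) ≤ t`. -/
theorem stmt7 (X : Type*) [MetricSpace X] [Fintype X] (δ ν t : ℝ) (hδ : 0 < δ)
    (hhyp : IsDeltaHyperbolic X δ) (hgeo : IsGeodesicWithDefect X ν) (hν : 0 ≤ ν)
    (ht : 4 * δ + 2 * ν ≤ t) (n : ℕ) (x : Fin (n + 1) → X)
    (hbij : Function.Bijective x)
    (hord : ∀ j k : Fin (n + 1), j ≤ k → dist (x j) (x 0) ≤ dist (x k) (x 0))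
    (i : Fin (n + 1)) (hi : t ≤ dist (x i) (x 0)) :
    ∃ j : Fin (n + 1), j < i ∧ dist (x j) (x i) ≤ 2 * δ + 2 * ν ∧
      ∀ k : Fin (n + 1), k ≤ i → dist (x k) (x i) ≤ t → dist (x k) (x j) ≤ t :=
  stmt7_general X δ ν t hδ hhyp hgeo hν ht n x hbij hord i hi
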